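/- Let m ≥ 2 be an integer and x > 0. Then φ_m'(x) = ((m−1)!/(−x)^m) · (e^{−x} − ∑_{i=0}^{m−1} (−x)^i/i!). -/

import Mathlib

open Real MeasureTheory Filter

/-- The digamma function psi(x) = Gamma'(x)/Gamma(x). -/
noncomputable def psi (x : ℝ) : ℝ := deriv Real.Gamma x / Real.Gamma x

/-- phi_m(x) = e^{-x} * sum_j (x^j/j!) psi(j+m). -/
noncomputable def phi (m x : ℝ) : ℝ :=
  Real.exp (-x) * ∑' j : ℕ, x ^ j / (Nat.factorial j : ℝ) * psi (j + m)

/-!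
Write `egf c x = ∑ c j x^j / j!`, so that `φ_m = e^{-x} · egf c` with `c j = ψ(j + m)`.
For coefficients of at most exponential growth, differentiation shifts the coefficients,
so `φ_m' = e^{-x} · egf (c (· + 1) - c)`, and `ψ(y + 1) = ψ(y) + 1/y` turns the difference
into `1/(j + m)`. Since `j/(j + m) = 1 - m/(j + m)`, the series `I_m = egf (1/(· + m))`
satisfies `x I_{m+1} = e^x - m I_m` and `-x I_1 = 1 - e^x`, which gives by induction
`(-x)^m I_m = (m-1)! (1 - e^x ∑_{i<m} (-x)^i/i!)`.
-/

open scoped Nat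

lemma psi_add_one {y : ℝ} (hy : ∀ n : ℕ, y ≠ -n) : psi (y + 1) = psi y + y⁻¹ := by
  have hy0 : y ≠ 0 := by simpa using hy 0
  have hy1 : ∀ n : ℕ, y + 1 ≠ -n := fun n h => hy (n + 1) (by push_cast; linarith)
  have hGamma : (fun z => Real.Gamma (z + 1)) =ᶠ[nhds y] fun z => z * Real.Gamma z := by
    filter_upwards [isOpen_ne.mem_nhds hy0] with z hz using Real.Gamma_add_one hz
  calc psi (y + 1) = logDeriv (fun z => Real.Gamma (z + 1)) y := by
        rw [← Function.comp_def Real.Gamma (· + 1),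
          logDeriv_comp (g := (· + 1)) (Real.differentiableAt_Gamma hy1)
            (differentiableAt_id.add_const 1)]
        simp [psi, logDeriv_apply]
    _ = logDeriv (fun z => z * Real.Gamma z) y := (logDeriv_congr_nhds hGamma).self_of_nhds
    _ = psi y + y⁻¹ := by
        rw [logDeriv_mul (f := fun z => z) y hy0 (Real.Gamma_ne_zero hy) differentiableAt_id
          (Real.differentiableAt_Gamma hy), logDeriv_id', add_comm, one_div]
        rfl

lemma psi_add_one_of_pos {y : ℝ} (hy : 0 < y) : psi (y + 1) = psi y + y⁻¹ :=
  psi_add_one fun n h => by linarith [(Nat.cast_nonneg n : (0 : ℝ) ≤ n)]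

lemma abs_psi_natCast_add_le {y : ℝ} (hy : 1 ≤ y) (n : ℕ) :
    |psi (n + y)| ≤ (|psi y| + 1) * 2 ^ n := by
  induction n with
  | zero => simp
  | succ n ih =>
    have hpos : 0 < (n : ℝ) + y := by positivity
    have hinv : ((n : ℝ) + y)⁻¹ ≤ 1 := inv_le_one_of_one_le₀ (by linarith)
    have hone : 1 ≤ (|psi y| + 1) * 2 ^ n :=
      one_le_mul_of_one_le_of_one_le (by linarith [abs_nonneg (psi y)]) (one_le_pow₀ one_le_two)
    calc |psi ((n + 1 : ℕ) + y)| = |psi (n + y) + ((n : ℝ) + y)⁻¹| := by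
          rw [Nat.cast_succ, add_right_comm, psi_add_one_of_pos hpos]
      _ ≤ |psi (n + y)| + ((n : ℝ) + y)⁻¹ := by
          simpa [abs_of_pos (inv_pos.mpr hpos)] using abs_add_le (psi (n + y)) ((n : ℝ) + y)⁻¹
      _ ≤ (|psi y| + 1) * 2 ^ (n + 1) := by rw [pow_succ]; linarith

noncomputable def egf (c : ℕ → ℝ) (x : ℝ) : ℝ := ∑' j : ℕ, x ^ j / (j ! : ℝ) * c j

section egf

variable {c : ℕ → ℝ} {C K : ℝ}

lemma abs_comp_succ_le (hc : ∀ j, |c j| ≤ C * K ^ j) (j : ℕ) :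
    |c (j + 1)| ≤ C * K * K ^ j := by
  rw [mul_assoc, ← pow_succ']
  exact hc (j + 1)

lemma summable_pow_div_factorial_mul (hc : ∀ j, |c j| ≤ C * K ^ j) (x : ℝ) :
    Summable fun j : ℕ => x ^ j / (j ! : ℝ) * c j := by
  refine ((Real.summable_pow_div_factorial (|x| * K)).mul_left C).of_norm_bounded fun j => ?_
  calc ‖x ^ j / (j ! : ℝ) * c j‖ = |x| ^ j / j ! * |c j| := by
        rw [norm_mul, norm_div, norm_pow, Real.norm_eq_abs, RCLike.norm_natCast, Real.norm_eq_abs]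
    _ ≤ |x| ^ j / j ! * (C * K ^ j) := by gcongr; exact hc j
    _ = C * ((|x| * K) ^ j / j !) := by ring

lemma hasDerivAt_pow_succ_div_factorial (j : ℕ) (x : ℝ) :
    HasDerivAt (fun z : ℝ => z ^ (j + 1) / ((j + 1)! : ℝ)) (x ^ j / (j ! : ℝ)) x := by
  refine ((hasDerivAt_pow (j + 1) x).div_const _).congr_deriv ?_
  rw [Nat.factorial_succ, Nat.cast_mul, Nat.add_sub_cancel]
  field_simp

lemma egf_eq_add_tsum (hc : ∀ j, |c j| ≤ C * K ^ j) (x : ℝ) :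
    egf c x = c 0 + ∑' j : ℕ, x ^ (j + 1) / ((j + 1)! : ℝ) * c (j + 1) := by
  rw [egf, (summable_pow_div_factorial_mul hc x).tsum_eq_zero_add]
  simp

lemma hasDerivAt_egf (hc : ∀ j, |c j| ≤ C * K ^ j) (x : ℝ) :
    HasDerivAt (egf c) (egf (fun j => c (j + 1)) x) x := by
  set R := |x| + 1
  have hshift := abs_comp_succ_le hc
  have hbound : ∀ (j : ℕ) z, z ∈ Metric.ball (0 : ℝ) R →
      ‖z ^ j / (j ! : ℝ) * c (j + 1)‖ ≤ R ^ j / j ! * (C * K * K ^ j) := fun j z hz => by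
    rw [mem_ball_zero_iff] at hz
    rw [norm_mul, norm_div, norm_pow, Real.norm_eq_abs, RCLike.norm_natCast, Real.norm_eq_abs]
    gcongr
    · exact hz.le
    · exact hshift j
  have hu : Summable fun j : ℕ => R ^ j / j ! * (C * K * K ^ j) :=
    ((Real.summable_pow_div_factorial (R * K)).mul_left (C * K)).congr fun j => by
      rw [mul_pow]; ring
  have htail := hasDerivAt_tsum_of_isPreconnected hu Metric.isOpen_ball
    (convex_ball (0 : ℝ) R).isPreconnected
    (fun j z _ => (hasDerivAt_pow_succ_div_factorial j z).mul_const (c (j + 1))) hbound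
    (Metric.mem_ball_self (by positivity)) ?_ (by simp [R] : x ∈ Metric.ball (0 : ℝ) R)
  · exact ((htail.const_add (c 0)).congr_of_eventuallyEq
      (Eventually.of_forall fun z => egf_eq_add_tsum hc z))
  · simp

lemma egf_sub {d : ℕ → ℝ} {C' K' : ℝ} (hc : ∀ j, |c j| ≤ C * K ^ j)
    (hd : ∀ j, |d j| ≤ C' * K' ^ j) (x : ℝ) : egf c x - egf d x = egf (fun j => c j - d j) x := by
  rw [egf, egf, egf, ← (summable_pow_div_factorial_mul hc x).tsum_sub
    (summable_pow_div_factorial_mul hd x)]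
  simp only [mul_sub]

lemma egf_const_mul (a : ℝ) (x : ℝ) : egf (fun j => a * c j) x = a * egf c x := by
  rw [egf, egf, ← tsum_mul_left]
  exact tsum_congr fun j => by ring

lemma mul_egf_shift (hc : ∀ j, |c j| ≤ C * K ^ j) (x : ℝ) :
    x * egf (fun j => c (j + 1)) x = egf (fun j => j * c j) x := by
  have hshift := abs_comp_succ_le hc
  have hterm : ∀ j : ℕ, x ^ (j + 1) / ((j + 1)! : ℝ) * (((j + 1 : ℕ) : ℝ) * c (j + 1)) =
      x * (x ^ j / (j ! : ℝ) * c (j + 1)) := fun j => by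
    rw [Nat.factorial_succ]; push_cast; field_simp; ring
  have hsum := (summable_pow_div_factorial_mul hshift x).mul_left x
  rw [egf, egf, tsum_eq_zero_add' (f := fun j : ℕ => x ^ j / (j ! : ℝ) * (j * c j))
    (by simpa only [hterm] using hsum), ← tsum_mul_left]
  simp only [hterm]
  simp

end egf

lemma egf_one (x : ℝ) : egf (fun _ => 1) x = Real.exp x := by
  simp [egf, Real.exp_eq_exp_ℝ, NormedSpace.exp_eq_tsum_div]

lemma abs_inv_add_le {m : ℝ} (hm : 0 < m) (j : ℕ) :
    |((j : ℝ) + m)⁻¹| ≤ m⁻¹ * 1 ^ j := by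
  rw [one_pow, mul_one, abs_of_pos (by positivity)]
  exact inv_anti₀ hm (by simp)

lemma mul_egf_inv_add_succ {m : ℝ} (hm : 0 < m) (x : ℝ) :
    x * egf (fun j => ((j : ℝ) + (m + 1))⁻¹) x =
      Real.exp x - m * egf (fun j => ((j : ℝ) + m)⁻¹) x := by
  have hpos : ∀ j : ℕ, 0 < (j : ℝ) + m := fun j => by positivity
  have hone : ∀ j : ℕ, |(1 : ℝ)| ≤ 1 * 1 ^ j := by simp
  have hmul : ∀ j : ℕ, |m * ((j : ℝ) + m)⁻¹| ≤ 1 * 1 ^ j := fun j => by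
    rw [one_pow, mul_one, abs_of_pos (by positivity), ← div_eq_mul_inv,
      div_le_one (hpos j)]
    simp
  calc x * egf (fun j => ((j : ℝ) + (m + 1))⁻¹) x
      = x * egf (fun j => (((j + 1 : ℕ) : ℝ) + m)⁻¹) x := by
        congr; funext j; push_cast; ring_nf
    _ = egf (fun j => j * ((j : ℝ) + m)⁻¹) x := mul_egf_shift (abs_inv_add_le hm) x
    _ = egf (fun j => 1 - m * ((j : ℝ) + m)⁻¹) x := by
        congr; funext j; field_simp [(hpos j).ne']; ring
    _ = Real.exp x - m * egf (fun j => ((j : ℝ) + m)⁻¹) x := by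
        rw [← egf_sub hone hmul, egf_one, egf_const_mul]

lemma neg_mul_egf_inv_add_one (x : ℝ) :
    -x * egf (fun j => ((j : ℝ) + 1)⁻¹) x = 1 - Real.exp x := by
  have hone : ∀ j : ℕ, |(1 : ℝ)| ≤ 1 * 1 ^ j := by simp
  have hterm : ∀ j : ℕ, x * (x ^ j / (j ! : ℝ) * ((j : ℝ) + 1)⁻¹) =
      x ^ (j + 1) / ((j + 1)! : ℝ) * 1 := fun j => by
    rw [Nat.factorial_succ]; push_cast; field_simp; ring
  rw [← egf_one, egf_eq_add_tsum hone, neg_mul, egf, ← tsum_mul_left]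
  simp only [hterm]
  ring

lemma neg_pow_mul_egf_inv_add {m : ℕ} (hm : 1 ≤ m) (x : ℝ) :
    (-x) ^ m * egf (fun j => ((j : ℝ) + m)⁻¹) x =
      (m - 1)! * (1 - Real.exp x * ∑ i ∈ Finset.range m, (-x) ^ i / (i ! : ℝ)) := by
  induction m, hm using Nat.le_induction with
  | base => simpa using neg_mul_egf_inv_add_one x
  | succ m hm ih =>
    have hrec := mul_egf_inv_add_succ (m := m) (by positivity) x
    have hfact : (m ! : ℝ) = m * (m - 1)! := by
      rw [← Nat.mul_factorial_pred (by omega : m ≠ 0)]; push_cast; ring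
    rw [Nat.add_sub_cancel, Finset.sum_range_succ]
    push_cast
    set T := ∑ i ∈ Finset.range m, (-x) ^ i / (i ! : ℝ)
    calc (-x) ^ (m + 1) * egf (fun j => ((j : ℝ) + (m + 1))⁻¹) x
        = -(-x) ^ m * (x * egf (fun j => ((j : ℝ) + (m + 1))⁻¹) x) := by ring
      _ = m ! * (1 - Real.exp x * T) - Real.exp x * (-x) ^ m := by
        rw [hrec]
        linear_combination (m : ℝ) * ih - (1 - Real.exp x * T) * hfact
      _ = m ! * (1 - Real.exp x * (T + (-x) ^ m / m !)) := by
        field_simp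
        ring

theorem stmt16 (m : ℕ) (hm : 2 ≤ m) (x : ℝ) (hx : 0 < x) :
    deriv (phi m) x = ((Nat.factorial (m - 1) : ℝ) / (-x) ^ m) *
      (Real.exp (-x) - ∑ i ∈ Finset.range m, (-x) ^ i / (Nat.factorial i : ℝ)) := by
  have hm1 : (1 : ℝ) ≤ m := by exact_mod_cast (by omega : 1 ≤ m)
  set c : ℕ → ℝ := fun j => psi (j + m)
  have hc : ∀ j, |c j| ≤ (|psi m| + 1) * 2 ^ j := abs_psi_natCast_add_le hm1
  have hshift : ∀ j, c (j + 1) - c j = ((j : ℝ) + m)⁻¹ := fun j => by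
    simp only [c]
    rw [Nat.cast_succ, add_right_comm, psi_add_one_of_pos (by positivity)]
    ring
  have hderiv : HasDerivAt (phi m) (Real.exp (-x) * egf (fun j => ((j : ℝ) + m)⁻¹) x) x := by
    rw [← funext hshift, ← egf_sub (abs_comp_succ_le hc) hc]
    exact ((hasDerivAt_neg x).exp.mul (hasDerivAt_egf hc x)).congr_deriv (by ring)
  have hclosed := neg_pow_mul_egf_inv_add (by omega : 1 ≤ m) x
  have hexp : Real.exp (-x) * Real.exp x = 1 := by
    rw [← Real.exp_add, neg_add_cancel, Real.exp_zero]
  rw [hderiv.deriv, div_mul_eq_mul_div, eq_div_iff (pow_ne_zero m (neg_ne_zero.mpr hx.ne'))]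
  set T := ∑ i ∈ Finset.range m, (-x) ^ i / (i ! : ℝ)
  linear_combination Real.exp (-x) * hclosed - ((m - 1)! : ℝ) * T * hexp
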